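/- Let D = (E, 𝓕) be a delta-matroid with ∅ ∈ 𝓕 (a normal delta-matroid), and let e1, e2 ∈ E be distinct elements such that {e1, e2} ∈ 𝓕 and such that every feasible set F ∈ 𝓕 with e2 ∉ F also satisfies e1 ∉ F (equivalently, D∖e2 = ({e1}, {∅}) ⊕ D∖{e1,e2}). Then T_D(z) = T_{D∖e1}(z) + 2z² · T_{D∖{e1,e2}}(z) in ℤ[z], where D∖e1 = (E∖{e1}, {F ∈ 𝓕 : e1 ∉ F}) and D∖{e1,e2} = (E∖{e1,e2}, {F ∈ 𝓕 : e1 ∉ F and e2 ∉ F}). -/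

import Mathlib

open Polynomial

/-- The width of a set system on a finite ground set, given by the predicate `P` describing
its feasible sets: the maximum cardinality of a feasible set minus the minimum cardinality. -/
noncomputable def sysWidth {E : Type*} (P : Finset E → Prop) : ℕ :=
  sSup {k | ∃ S, P S ∧ S.card = k} - sInf {k | ∃ S, P S ∧ S.card = k}

/-- The twist polynomial of the set system with ground set `ground` and feasible sets
described by the predicate `P`: `T_D(z) = Σ_{A ⊆ ground} z^{w(D*A)}`, where a set `S` is
feasible in the twist `D*A` iff `S ∆ A` is feasible in `D`. -/
noncomputable def sysTwistPoly {E : Type*} [DecidableEq E] (ground : Finset E)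
    (P : Finset E → Prop) : Polynomial ℤ :=
  ∑ A ∈ ground.powerset, (X : Polynomial ℤ) ^ sysWidth fun S => P (symmDiff S A)


/-!
Write `P = {e1, e2}`. Exchanging against `∅` and against `P` shows that `F ↦ F ∆ P` maps the
feasible sets containing both of `e1, e2` bijectively onto those containing neither, and that a
feasible set containing only `e2` becomes, after removing `e2`, within distance one of a feasible
set containing neither.

The width of `D * B` is the spread of the numbers `|F ∆ B|`, `F` feasible. Group the twists by
`A = B \ P`, and let `w` be the width of `D∖{e1,e2} * A`. Then `D * A` and `D * (A ∪ P)` have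
width `w + 2`, while for `B = A ∪ {e1}` and `B = A ∪ {e2}` flipping `P` does not change `|F ∆ B|`,
so `D * B` has the width of `D∖e1 * B`, and `D∖e1 * (A ∪ {e1})` is `D∖e1 * A` shifted by one.
-/

open Finset
open scoped symmDiff

namespace Finset

variable {α : Type*} [DecidableEq α] {a b : α} {s t : Finset α}

lemma card_insert_symmDiff_of_notMem (hs : a ∉ s) (ht : a ∉ t) :
    #(insert a s ∆ t) = #(s ∆ t) + 1 := by
  have : insert a s ∆ t = insert a (s ∆ t) := by
    ext x; by_cases hx : x = a <;> simp [mem_symmDiff, hx, hs, ht]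
  rw [this, card_insert_of_notMem (by simp [mem_symmDiff, hs, ht])]

lemma card_symmDiff_pair_of_notMem (hab : a ≠ b) (ha : a ∉ s) (hb : b ∉ s) :
    #(s ∆ {a, b}) = #s + 2 := by
  rw [symmDiff_eq_union (by simp [ha, hb]), card_union_of_disjoint (by simp [ha, hb]),
    card_pair hab]

lemma card_symmDiff_pair_of_mem_iff_notMem (hab : a ≠ b) (h : a ∈ s ↔ b ∉ s) :
    #(s ∆ {a, b}) = #s := by
  wlog ha : a ∈ s generalizing a b
  · rw [pair_comm]
    exact this hab.symm (by tauto) (by tauto)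
  have hb : b ∉ s := h.1 ha
  have : s ∆ {a, b} = insert b (s.erase a) := by
    ext x; by_cases hxa : x = a <;> by_cases hxb : x = b <;> simp_all [mem_symmDiff]
  rw [this, card_insert_of_notMem (by simp [hb]), card_erase_add_one ha]

lemma card_symmDiff_le_add (s t u : Finset α) : #(s ∆ u) ≤ #(s ∆ t) + #(t ∆ u) :=
  (card_le_card (symmDiff_triangle s t u)).trans (card_union_le _ _)

end Finset

def SymmExchange {E : Type*} [DecidableEq E] (𝓕 : Finset (Finset E)) : Prop :=
  ∀ A ∈ 𝓕, ∀ B ∈ 𝓕, ∀ u ∈ A ∆ B, ∃ v ∈ A ∆ B, A ∆ {u, v} ∈ 𝓕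

structure IsLeafPair {E : Type*} [DecidableEq E] (𝓕 : Finset (Finset E)) (e1 e2 : E) : Prop where
  exchange : SymmExchange 𝓕
  empty_mem : ∅ ∈ 𝓕
  ne : e1 ≠ e2
  pair_mem : {e1, e2} ∈ 𝓕
  leaf : ∀ F ∈ 𝓕, e2 ∉ F → e1 ∉ F

/-- The cardinalities of the feasible sets of the twist `D * B`, read off from `D`. -/
def twistCards {E : Type*} [DecidableEq E] (P : Finset E → Prop) (B : Finset E) : Set ℕ :=
  (fun F => #(F ∆ B)) '' {F | P F}

section Twist

variable {E : Type*} [DecidableEq E]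

lemma sysWidth_twist (P : Finset E → Prop) (B : Finset E) :
    sysWidth (fun S => P (S ∆ B)) = sSup (twistCards P B) - sInf (twistCards P B) := by
  have : {k | ∃ S, P (S ∆ B) ∧ #S = k} = twistCards P B := by
    ext k
    constructor
    · rintro ⟨S, hS, rfl⟩
      exact ⟨S ∆ B, hS, congrArg card (symmDiff_symmDiff_cancel_right B S)⟩
    · rintro ⟨F, hF, rfl⟩
      exact ⟨F ∆ B, by rwa [symmDiff_symmDiff_cancel_right], rfl⟩
  rw [sysWidth, this]

lemma exists_isLeast_isGreatest_twistCards [Fintype E] {P : Finset E → Prop} (hP : ∃ F, P F)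
    (B : Finset E) : ∃ a b, IsLeast (twistCards P B) a ∧ IsGreatest (twistCards P B) b := by
  have hne : (twistCards P B).Nonempty := let ⟨F, hF⟩ := hP; ⟨_, F, hF, rfl⟩
  have hfin : (twistCards P B).Finite := (Set.toFinite _).image _
  exact ⟨_, _, isLeast_csInf hne, hne.csSup_mem hfin, fun _ hk => le_csSup hfin.bddAbove hk⟩

lemma sysWidth_twist_insert [Fintype E] {P : Finset E → Prop} {e : E} {A : Finset E}
    (hP : ∃ F, P F) (hPe : ∀ F, P F → e ∉ F) (hA : e ∉ A) :
    sysWidth (fun S => P (S ∆ insert e A)) = sysWidth (fun S => P (S ∆ A)) := by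
  have hshift : twistCards P (insert e A) = (· + 1) '' twistCards P A := by
    rw [twistCards, twistCards, Set.image_image]
    refine Set.image_congr fun F hF => ?_
    rw [symmDiff_comm, card_insert_symmDiff_of_notMem hA (hPe F hF), symmDiff_comm]
  obtain ⟨a, b, ha, hb⟩ := exists_isLeast_isGreatest_twistCards hP A
  have hmono : Monotone (· + 1 : ℕ → ℕ) := fun _ _ h => Nat.add_le_add_right h 1
  rw [sysWidth_twist, sysWidth_twist, hshift, (hmono.map_isLeast ha).csInf_eq,
    (hmono.map_isGreatest hb).csSup_eq, ha.csInf_eq, hb.csSup_eq, Nat.add_sub_add_right]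

end Twist

namespace IsLeafPair

variable {E : Type*} [DecidableEq E] {𝓕 : Finset (Finset E)} {e1 e2 : E} {F : Finset E}

lemma symmDiff_pair_mem (h : IsLeafPair 𝓕 e1 e2) (hF : F ∈ 𝓕) (h12 : e1 ∈ F ↔ e2 ∈ F) :
    F ∆ {e1, e2} ∈ 𝓕 := by
  by_cases h1 : e1 ∈ F
  · have h2 : e2 ∈ F := h12.1 h1
    obtain ⟨v, -, hvF⟩ := h.exchange F hF ∅ h.empty_mem e2 (by simp [mem_symmDiff, h2])
    -- `e2` leaves `F ∆ {e2, v}`, so `e1` must leave too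
    have hv1 : v = e1 := by
      by_contra hv1
      exact h.leaf _ hvF (by simp [mem_symmDiff, h2])
        (by simp [mem_symmDiff, h1, Ne.symm hv1, h.ne])
    rwa [hv1, pair_comm] at hvF
  · have h2 : e2 ∉ F := h12.not.1 h1
    obtain ⟨v, -, hvF⟩ := h.exchange F hF _ h.pair_mem e1 (by simp [mem_symmDiff, h1])
    -- `e1` enters `F ∆ {e1, v}`, so `e2` must enter too
    have hv2 : v = e2 := by
      by_contra hv2
      exact h.leaf _ hvF (by simp [mem_symmDiff, h2, Ne.symm hv2, h.ne.symm])
        (by simp [mem_symmDiff, h1])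
    rwa [hv2] at hvF

lemma exists_mem_card_symmDiff_erase_le_one (h : IsLeafPair 𝓕 e1 e2) (hF : F ∈ 𝓕)
    (h1 : e1 ∉ F) (h2 : e2 ∈ F) : ∃ G ∈ 𝓕, e1 ∉ G ∧ e2 ∉ G ∧ #(G ∆ F.erase e2) ≤ 1 := by
  obtain ⟨v, hv, hvF⟩ := h.exchange F hF _ h.pair_mem e1 (by simp [mem_symmDiff, h1])
  have hv2 : v ≠ e2 := by rintro rfl; simp [mem_symmDiff, h2] at hv
  have h1' : e1 ∈ F ∆ {e1, v} := by simp [mem_symmDiff, h1]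
  have h2' : e2 ∈ F ∆ {e1, v} := by_contra fun h2' => h.leaf _ hvF h2' h1'
  refine ⟨F ∆ {e1, v} ∆ {e1, e2}, h.symmDiff_pair_mem hvF (iff_of_true h1' h2'),
    by simp [mem_symmDiff, h1'], by simp [mem_symmDiff, h2'], ?_⟩
  refine (card_le_card (s := _ ∆ _) (t := {v}) fun x hx => ?_).trans (card_singleton v).le
  simp only [mem_symmDiff, mem_insert, mem_singleton, mem_erase] at hx ⊢
  grind

lemma exists_mem_card_symmDiff_bounds (h : IsLeafPair 𝓕 e1 e2) (hF : F ∈ 𝓕) {A : Finset E}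
    (hA1 : e1 ∉ A) (hA2 : e2 ∉ A) :
    ∃ G ∈ 𝓕, e1 ∉ G ∧ e2 ∉ G ∧ #(G ∆ A) ≤ #(F ∆ A) ∧ #(F ∆ A) ≤ #(G ∆ A) + 2 := by
  by_cases h1 : e1 ∈ F
  · have h2 : e2 ∈ F := by_contra fun h2 => h.leaf F hF h2 h1
    have hG1 : e1 ∉ F ∆ {e1, e2} := by simp [mem_symmDiff, h1]
    have hG2 : e2 ∉ F ∆ {e1, e2} := by simp [mem_symmDiff, h2]
    have hFA : #(F ∆ A) = #(F ∆ {e1, e2} ∆ A) + 2 := by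
      rw [← card_symmDiff_pair_of_notMem h.ne (by simp [mem_symmDiff, hG1, hA1])
        (by simp [mem_symmDiff, hG2, hA2]), symmDiff_right_comm, symmDiff_symmDiff_cancel_right]
    exact ⟨_, h.symmDiff_pair_mem hF (iff_of_true h1 h2), hG1, hG2, by omega, by omega⟩
  by_cases h2 : e2 ∈ F
  · obtain ⟨G, hG, hG1, hG2, hGF⟩ := h.exists_mem_card_symmDiff_erase_le_one hF h1 h2
    have hFA : #(F ∆ A) = #(F.erase e2 ∆ A) + 1 := by
      conv_lhs => rw [← insert_erase h2]
      exact card_insert_symmDiff_of_notMem (notMem_erase _ _) hA2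
    have hHG : #(F.erase e2 ∆ G) ≤ 1 := by rwa [symmDiff_comm]
    have := card_symmDiff_le_add G (F.erase e2) A
    have := card_symmDiff_le_add (F.erase e2) G A
    exact ⟨G, hG, hG1, hG2, by omega, by omega⟩
  · exact ⟨F, hF, h1, h2, le_rfl, by omega⟩

lemma twistCards_symmDiff_pair_subset (h : IsLeafPair 𝓕 e1 e2) {B : Finset E}
    (hB : e1 ∈ B ↔ e2 ∈ B) : twistCards (· ∈ 𝓕) (B ∆ {e1, e2}) ⊆ twistCards (· ∈ 𝓕) B := by
  rintro _ ⟨F, hF, rfl⟩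
  by_cases h12 : e1 ∈ F ↔ e2 ∈ F
  · refine ⟨F ∆ {e1, e2}, h.symmDiff_pair_mem hF h12, ?_⟩
    dsimp only
    rw [symmDiff_assoc, symmDiff_comm ({e1, e2} : Finset E) B]
  · refine ⟨F, hF, ?_⟩
    dsimp only
    rw [← symmDiff_assoc, card_symmDiff_pair_of_mem_iff_notMem h.ne]
    simp only [mem_symmDiff]
    tauto

lemma sysWidth_twist_insert_insert (h : IsLeafPair 𝓕 e1 e2) {A : Finset E} (hA1 : e1 ∉ A)
    (hA2 : e2 ∉ A) :
    sysWidth (fun S => S ∆ insert e1 (insert e2 A) ∈ 𝓕) = sysWidth (fun S => S ∆ A ∈ 𝓕) := by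
  have hA : insert e1 (insert e2 A) = A ∆ {e1, e2} := by
    rw [symmDiff_eq_union (by simp [hA1, hA2]), union_comm, insert_union, singleton_union]
  have hA' : e1 ∈ A ∆ {e1, e2} ↔ e2 ∈ A ∆ {e1, e2} := by simp [← hA]
  have hsub := h.twistCards_symmDiff_pair_subset hA'
  rw [symmDiff_symmDiff_cancel_right] at hsub
  rw [hA, sysWidth_twist (· ∈ 𝓕), sysWidth_twist (· ∈ 𝓕),
    (h.twistCards_symmDiff_pair_subset (iff_of_false hA1 hA2)).antisymm hsub]

lemma sysWidth_twist_eq_deletion (h : IsLeafPair 𝓕 e1 e2) {B : Finset E}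
    (hB : e1 ∈ B ↔ e2 ∉ B) :
    sysWidth (fun S => S ∆ B ∈ 𝓕) = sysWidth (fun S => S ∆ B ∈ 𝓕 ∧ e1 ∉ S ∆ B) := by
  have hcards : twistCards (· ∈ 𝓕) B = twistCards (fun F => F ∈ 𝓕 ∧ e1 ∉ F) B := by
    refine subset_antisymm ?_ (Set.image_mono fun F hF => hF.1)
    rintro _ ⟨F, hF, rfl⟩
    by_cases h1 : e1 ∈ F
    · have h2 : e2 ∈ F := by_contra fun h2 => h.leaf F hF h2 h1
      refine ⟨F ∆ {e1, e2}, ⟨h.symmDiff_pair_mem hF (iff_of_true h1 h2), by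
        simp [mem_symmDiff, h1]⟩, ?_⟩
      dsimp only
      rw [symmDiff_right_comm, card_symmDiff_pair_of_mem_iff_notMem h.ne]
      simp only [mem_symmDiff]
      tauto
    · exact ⟨F, ⟨hF, h1⟩, rfl⟩
  rw [sysWidth_twist (· ∈ 𝓕), sysWidth_twist (fun F => F ∈ 𝓕 ∧ e1 ∉ F), hcards]

lemma sysWidth_twist_eq_add_two [Fintype E] (h : IsLeafPair 𝓕 e1 e2) {A : Finset E}
    (hA1 : e1 ∉ A) (hA2 : e2 ∉ A) :
    sysWidth (fun S => S ∆ A ∈ 𝓕)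
      = sysWidth (fun S => S ∆ A ∈ 𝓕 ∧ e1 ∉ S ∆ A ∧ e2 ∉ S ∆ A) + 2 := by
  obtain ⟨a, b, ha, hb⟩ := exists_isLeast_isGreatest_twistCards
    (P := fun F => F ∈ 𝓕 ∧ e1 ∉ F ∧ e2 ∉ F) ⟨∅, h.empty_mem, notMem_empty _, notMem_empty _⟩ A
  have hmin : IsLeast (twistCards (· ∈ 𝓕) A) a := by
    obtain ⟨G, ⟨hG, -⟩, rfl⟩ := ha.1
    refine ⟨⟨G, hG, rfl⟩, ?_⟩
    rintro _ ⟨F, hF, rfl⟩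
    obtain ⟨G', hG', h1, h2, hle, -⟩ := h.exists_mem_card_symmDiff_bounds hF hA1 hA2
    exact (ha.2 ⟨G', ⟨hG', h1, h2⟩, rfl⟩).trans hle
  have hmax : IsGreatest (twistCards (· ∈ 𝓕) A) (b + 2) := by
    obtain ⟨G, ⟨hG, h1, h2⟩, rfl⟩ := hb.1
    refine ⟨⟨G ∆ {e1, e2}, h.symmDiff_pair_mem hG (iff_of_false h1 h2), ?_⟩, ?_⟩
    · dsimp only
      rw [symmDiff_right_comm, card_symmDiff_pair_of_notMem h.ne
        (by simp [mem_symmDiff, h1, hA1]) (by simp [mem_symmDiff, h2, hA2])]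
    rintro _ ⟨F, hF, rfl⟩
    obtain ⟨G', hG', h1', h2', -, hle⟩ := h.exists_mem_card_symmDiff_bounds hF hA1 hA2
    exact hle.trans (Nat.add_le_add_right (hb.2 ⟨G', ⟨hG', h1', h2'⟩, rfl⟩) 2)
  have hab : a ≤ b := ha.2 hb.1
  rw [sysWidth_twist (· ∈ 𝓕), sysWidth_twist (fun F => F ∈ 𝓕 ∧ e1 ∉ F ∧ e2 ∉ F),
    hmin.csInf_eq, hmax.csSup_eq, ha.csInf_eq, hb.csSup_eq]
  omega

end IsLeafPair

/-- Proposition 6.2 (leaf recursion for delta-matroids): let `D = (E, 𝓕)` be a normal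
delta-matroid with distinct `e1, e2 ∈ E` such that `{e1, e2} ∈ 𝓕` and every feasible set
avoiding `e2` also avoids `e1` (equivalently, `D∖e2 = ({e1},{∅}) ⊕ D∖{e1,e2}`).  Then
`T_D(z) = T_{D∖e1}(z) + 2z²·T_{D∖{e1,e2}}(z)`. -/
theorem twistPoly_leaf_recursion
    {E : Type*} [Fintype E] [DecidableEq E]
    (𝓕 : Finset (Finset E))
    (hexchange : ∀ A ∈ 𝓕, ∀ B ∈ 𝓕, ∀ u ∈ symmDiff A B,
      ∃ v ∈ symmDiff A B, symmDiff A {u, v} ∈ 𝓕)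
    (hnormal : ∅ ∈ 𝓕)
    (e1 e2 : E) (hne : e1 ≠ e2) (hfeas : ({e1, e2} : Finset E) ∈ 𝓕)
    (hleaf : ∀ F ∈ 𝓕, e2 ∉ F → e1 ∉ F) :
    sysTwistPoly (Finset.univ : Finset E) (· ∈ 𝓕)
      = sysTwistPoly (Finset.univ.erase e1) (fun F => F ∈ 𝓕 ∧ e1 ∉ F)
        + 2 * X ^ 2 * sysTwistPoly ((Finset.univ.erase e1).erase e2)
            (fun F => F ∈ 𝓕 ∧ e1 ∉ F ∧ e2 ∉ F) := by
  have h : IsLeafPair 𝓕 e1 e2 := ⟨hexchange, hnormal, hne, hfeas, hleaf⟩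
  set U := (Finset.univ.erase e1).erase e2 with hU
  have he2 : e2 ∉ U := by simp [hU]
  have he1 : e1 ∉ insert e2 U := by simp [hU, hne]
  have huniv : Finset.univ = insert e1 (insert e2 U) := by
    rw [hU, insert_erase (by simp [hne.symm]), insert_erase (mem_univ e1)]
  rw [huniv, erase_insert he1]
  simp only [sysTwistPoly, sum_powerset_insert he1, sum_powerset_insert he2, mul_sum,
    ← sum_add_distrib]
  refine sum_congr rfl fun A hA => ?_
  have hA1 : e1 ∉ A := fun h1 => he1 (mem_insert_of_mem (mem_powerset.1 hA h1))
  have hA2 : e2 ∉ A := fun h2 => he2 (mem_powerset.1 hA h2)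
  rw [h.sysWidth_twist_insert_insert hA1 hA2, h.sysWidth_twist_eq_add_two hA1 hA2,
    h.sysWidth_twist_eq_deletion (B := insert e1 A) (by simp [hne.symm, hA2]),
    sysWidth_twist_insert (P := fun F => F ∈ 𝓕 ∧ e1 ∉ F) ⟨∅, hnormal, notMem_empty e1⟩
      (fun _ hF => hF.2) hA1,
    h.sysWidth_twist_eq_deletion (B := insert e2 A) (by simp [hne, hA1])]
  ring
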